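/- Let σ be a well-formed trace. If σ contains a pair of conflicting events that is an HB race in σ, then σ contains a predictive race, i.e. a pair of conflicting events both of which are enabled in some correct reordering of σ. -/

import Mathlib

/-!
Events, traces, and predictive data races.

An event datum is a pair of a thread identifier and an operation
(read/write of a memory location, or acquire/release of a lock).
Following the convention that events of a trace are identified with
positions (hence pairwise distinct), a trace is modeled as a
duplicate-free list of event *identifiers* (natural numbers), listed
in trace order, together with a global data assignment
`ev : ℕ → EventData` giving the thread and operation of each event.
-/

inductive Op : Type
  | read : ℕ → Op
  | write : ℕ → Op
  | acq : ℕ → Op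
  | rel : ℕ → Op
  deriving DecidableEq

structure EventData : Type where
  thread : ℕ
  op : Op
  deriving DecidableEq

abbrev Trace : Type := List ℕ

namespace Race

variable (ev : ℕ → EventData)

/-- Trace order: `e1` occurs no later than `e2` in `σ`. -/
def trord (σ : Trace) (e1 e2 : ℕ) : Prop :=
  e1 ∈ σ ∧ e2 ∈ σ ∧ σ.idxOf e1 ≤ σ.idxOf e2

/-- Thread order: trace order plus equality of threads. -/
def threadOrd (σ : Trace) (e1 e2 : ℕ) : Prop :=
  trord σ e1 e2 ∧ (ev e1).thread = (ev e2).thread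

/-- Lock-semantics check: `h` records, for each lock, the thread currently
holding it.  A lock may be acquired only when free, and released only by
the thread holding it. -/
def lockOk : (ℕ → Option ℕ) → Trace → Prop
  | _, [] => True
  | h, e :: rest =>
    match (ev e).op with
    | Op.acq l => h l = none ∧ lockOk (Function.update h l (some (ev e).thread)) rest
    | Op.rel l => h l = some (ev e).thread ∧ lockOk (Function.update h l none) rest
    | _ => lockOk h rest

/-- A well-formed trace: pairwise distinct events respecting lock semantics. -/
def WellFormed (σ : Trace) : Prop := σ.Nodup ∧ lockOk ev (fun _ => none) σ

/-- A well-formed subtrace: a contiguous subtrace of some well-formed trace. -/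
def WellFormedSub (σ : Trace) : Prop :=
  ∃ pre suf : Trace, WellFormed ev (pre ++ σ ++ suf)

/-- Happens-before: the smallest partial order on the events of `σ` containing
thread order and ordering each release before every later acquire of the
same lock. -/
inductive HB (σ : Trace) : ℕ → ℕ → Prop
  | thread_order {e1 e2 : ℕ} : threadOrd ev σ e1 e2 → HB σ e1 e2
  | rel_acq {e1 e2 l : ℕ} :
      trord σ e1 e2 → (ev e1).op = Op.rel l → (ev e2).op = Op.acq l → HB σ e1 e2
  | trans {e1 e2 e3 : ℕ} : HB σ e1 e2 → HB σ e2 e3 → HB σ e1 e3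

def isWrite (o : Op) : Prop := ∃ x, o = Op.write x

/-- The memory location accessed by an operation, if any. -/
def loc : Op → Option ℕ
  | Op.read x => some x
  | Op.write x => some x
  | _ => none

/-- Conflicting events: same location, different threads, at least one write. -/
def Conflicting (e1 e2 : ℕ) : Prop :=
  (ev e1).thread ≠ (ev e2).thread ∧
  (∃ x, loc (ev e1).op = some x ∧ loc (ev e2).op = some x) ∧
  (isWrite (ev e1).op ∨ isWrite (ev e2).op)

/-- An HB race: a conflicting pair of events of `σ`, unordered by happens-before. -/
def HBRace (σ : Trace) (e1 e2 : ℕ) : Prop :=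
  e1 ∈ σ ∧ e2 ∈ σ ∧ Conflicting ev e1 e2 ∧ ¬ HB ev σ e1 e2 ∧ ¬ HB ev σ e2 e1

/-- `lw σ e`: the last write (to the location read by `e`) before `e` in `σ`. -/
def lw (σ : Trace) (e : ℕ) : Option ℕ :=
  match (ev e).op with
  | Op.read x =>
      ((σ.take (σ.idxOf e)).filter fun f => decide ((ev f).op = Op.write x)).getLast?
  | _ => none

/-- The matching release of an acquire: the first release of the same lock after it. -/
def matchRel (σ : Trace) (a : ℕ) : Option ℕ :=
  match (ev a).op with
  | Op.acq l =>
      ((σ.drop (σ.idxOf a + 1)).filter fun f => decide ((ev f).op = Op.rel l)).head?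
  | _ => none

/-- The matching acquire of a release: the last acquire of the same lock before it. -/
def matchAcq (σ : Trace) (r : ℕ) : Option ℕ :=
  match (ev r).op with
  | Op.rel l =>
      ((σ.take (σ.idxOf r)).filter fun f => decide ((ev f).op = Op.acq l)).getLast?
  | _ => none

/-- The last event of the same thread before `e` in `σ`. -/
def prevE (σ : Trace) (e : ℕ) : Option ℕ :=
  ((σ.take (σ.idxOf e)).filter fun f => decide ((ev f).thread = (ev e).thread)).getLast?

/-- `ρ` is a correct reordering of `σ`. -/
structure CorrectReordering (σ ρ : Trace) : Prop where
  wf : WellFormed ev ρ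
  subset : ∀ e ∈ ρ, e ∈ σ
  to_closed : ∀ e1 e2 : ℕ, threadOrd ev σ e1 e2 → e2 ∈ ρ → e1 ∈ ρ ∧ threadOrd ev ρ e1 e2
  lw_eq : ∀ e ∈ ρ, (∃ x, (ev e).op = Op.read x) → lw ev ρ e = lw ev σ e

/-- `e` is enabled in the correct reordering `ρ` of `σ`. -/
def Enabled (σ ρ : Trace) (e : ℕ) : Prop :=
  e ∈ σ ∧ e ∉ ρ ∧ ∀ f : ℕ, threadOrd ev σ f e → f ≠ e → f ∈ ρ

/-- A reordering is sync-preserving if acquires of a common lock keep their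
relative order from `σ`. -/
def SyncPres (σ ρ : Trace) : Prop :=
  ∀ a1 a2 l : ℕ, a1 ∈ ρ → a2 ∈ ρ → (ev a1).op = Op.acq l → (ev a2).op = Op.acq l →
    (trord ρ a1 a2 ↔ trord σ a1 a2)

/-- A sync-preserving race. -/
def SyncPresRace (σ : Trace) (e1 e2 : ℕ) : Prop :=
  e1 ∈ σ ∧ e2 ∈ σ ∧ Conflicting ev e1 e2 ∧
  ∃ ρ : Trace, CorrectReordering ev σ ρ ∧ SyncPres ev σ ρ ∧
    Enabled ev σ ρ e1 ∧ Enabled ev σ ρ e2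

/-- A predictive race. -/
def PredictiveRace (σ : Trace) (e1 e2 : ℕ) : Prop :=
  e1 ∈ σ ∧ e2 ∈ σ ∧ Conflicting ev e1 e2 ∧
  ∃ ρ : Trace, CorrectReordering ev σ ρ ∧ Enabled ev σ ρ e1 ∧ Enabled ev σ ρ e2

/-- A subset of the events of `σ`, downward closed under thread order and
closed under last-writes. -/
def TLClosed (σ : Trace) (S : Set ℕ) : Prop :=
  (∀ e ∈ S, e ∈ σ) ∧
  (∀ e1 e2 : ℕ, threadOrd ev σ e1 e2 → e2 ∈ S → e1 ∈ S) ∧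
  (∀ e ∈ S, ∀ f : ℕ, lw ev σ e = some f → f ∈ S)

/-- The smallest TL-closed set containing `S`. -/
def TLClosure (σ : Trace) (S : Set ℕ) : Set ℕ :=
  ⋂₀ {C : Set ℕ | TLClosed ev σ C ∧ S ⊆ C}

/-- Sync-preserving closed sets. -/
def SPClosed (σ : Trace) (S : Set ℕ) : Prop :=
  TLClosed ev σ S ∧
  ∀ a1 a2 l : ℕ, a1 ∈ S → a2 ∈ S → (ev a1).op = Op.acq l → (ev a2).op = Op.acq l →
    trord σ a1 a2 → a1 ≠ a2 → ∀ r : ℕ, matchRel ev σ a1 = some r → r ∈ S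

/-- The smallest sync-preserving closed set containing `S`. -/
def SPClosure (σ : Trace) (S : Set ℕ) : Set ℕ :=
  ⋂₀ {C : Set ℕ | SPClosed ev σ C ∧ S ⊆ C}

/-- `SPIdeal σ e1 e2 = SPClosure σ ({prev σ e1, prev σ e2} \ {⊥})`. -/
def SPIdeal (σ : Trace) (e1 e2 : ℕ) : Set ℕ :=
  SPClosure ev σ {f : ℕ | prevE ev σ e1 = some f ∨ prevE ev σ e2 = some f}

/-- Local time: the number of events strictly below `e` in thread order. -/
def ltime (σ : Trace) (e : ℕ) : ℕ :=
  ((σ.take (σ.idxOf e)).filter fun f => decide ((ev f).thread = (ev e).thread)).length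

/-- Causal timestamp: for each thread `t`, the maximum local time of an
event of thread `t` happening before `e` (and `-1` if there is none). -/
noncomputable def ctime (σ : Trace) (e : ℕ) (t : ℕ) : ℤ :=
  sSup (insert (-1)
    {n : ℤ | ∃ f ∈ σ, (ev f).thread = t ∧ HB ev σ f e ∧ n = (ltime ev σ f : ℤ)})

end Race

/-
Among all HB races `(e1, e2)` with `e1` before `e2`, pick one whose later event `e2` comes first
in the trace, and keep exactly the events that strictly happen before `e1` or `e2`, in their
original order. This set is closed under happens-before, which makes the kept trace respect lock
semantics: before an acquire (release) the last event on the same lock is a release (an acquire of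
the same thread), and it happens before it. It is also closed under last writes: a read in it
precedes `e2`, and if its last write did not happen before it the two would form an earlier HB
race. So the kept events form a correct reordering in which `e1` and `e2` are both enabled.
-/

namespace List

theorem getLast?_filter_of_forall {α : Type*} {l : List α} {p : α → Bool}
    (h : ∀ a, l.getLast? = some a → p a) : (l.filter p).getLast? = l.getLast? := by
  rcases l.eq_nil_or_concat with rfl | ⟨l', a, rfl⟩
  · rfl
  · simp [filter_append, h a (by simp)]

variable {α : Type*} [BEq α] [LawfulBEq α]

theorem take_idxOf_filter {l : List α} {p : α → Bool} {x : α} (hx : x ∈ l.filter p) :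
    (l.filter p).take ((l.filter p).idxOf x) = (l.take (l.idxOf x)).filter p := by
  have hxl : x ∈ l := mem_of_mem_filter hx
  have hsplit : l = l.take (l.idxOf x) ++ x :: l.drop (l.idxOf x + 1) := by
    have hlt : l.idxOf x < l.length := idxOf_lt_length_iff.2 hxl
    conv_lhs => rw [← take_append_drop (l.idxOf x) l, drop_eq_getElem_cons hlt, getElem_idxOf hlt]
  have hnot : x ∉ (l.take (l.idxOf x)).filter p := fun h =>
    lt_irrefl _ ((mem_take_iff_idxOf_lt hxl).1 (mem_of_mem_filter h))
  have hfilter : l.filter p =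
      (l.take (l.idxOf x)).filter p ++ x :: (l.drop (l.idxOf x + 1)).filter p := by
    conv_lhs => rw [hsplit]
    rw [filter_append, filter_cons_of_pos (mem_filter.1 hx).2]
  rw [hfilter, idxOf_append_of_notMem hnot, idxOf_cons_self, add_zero, take_left' rfl]

theorem idxOf_filter_lt_idxOf_filter_iff {l : List α} {p : α → Bool} {a b : α}
    (ha : a ∈ l.filter p) (hb : b ∈ l.filter p) :
    (l.filter p).idxOf a < (l.filter p).idxOf b ↔ l.idxOf a < l.idxOf b := by
  rw [← mem_take_iff_idxOf_lt ha, take_idxOf_filter hb, mem_filter,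
    mem_take_iff_idxOf_lt (mem_of_mem_filter ha)]
  simp [(mem_filter.1 ha).2]

theorem idxOf_filter_le_idxOf_filter_iff {l : List α} {p : α → Bool} {a b : α}
    (ha : a ∈ l.filter p) (hb : b ∈ l.filter p) :
    (l.filter p).idxOf a ≤ (l.filter p).idxOf b ↔ l.idxOf a ≤ l.idxOf b := by
  simpa only [not_lt] using (idxOf_filter_lt_idxOf_filter_iff hb ha).not

end List

namespace Race

open List

variable {ev : ℕ → EventData}

theorem trord.trans {σ : Trace} {a b c : ℕ} (hab : trord σ a b) (hbc : trord σ b c) :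
    trord σ a c :=
  ⟨hab.1, hbc.2.1, hab.2.2.trans hbc.2.2⟩

theorem trord.antisymm {σ : Trace} {a b : ℕ} (hab : trord σ a b) (hba : trord σ b a) : a = b :=
  (idxOf_inj hab.1).1 (le_antisymm hab.2.2 hba.2.2)

theorem trord_filter_iff {σ : Trace} {p : ℕ → Bool} {a b : ℕ}
    (ha : a ∈ σ.filter p) (hb : b ∈ σ.filter p) : trord (σ.filter p) a b ↔ trord σ a b := by
  simp only [trord, ha, hb, mem_of_mem_filter ha, mem_of_mem_filter hb, true_and,
    idxOf_filter_le_idxOf_filter_iff ha hb]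

theorem HB.trord {σ : Trace} {a b : ℕ} (h : HB ev σ a b) : trord σ a b := by
  induction h with
  | thread_order h => exact h.1
  | rel_acq h _ _ => exact h
  | trans _ _ ih1 ih2 => exact ih1.trans ih2

def lockStep (ev : ℕ → EventData) (h : ℕ → Option ℕ) (e : ℕ) : ℕ → Option ℕ :=
  match (ev e).op with
  | Op.acq l => Function.update h l (some (ev e).thread)
  | Op.rel l => Function.update h l none
  | _ => h

def LockAllows (ev : ℕ → EventData) (h : ℕ → Option ℕ) (e : ℕ) : Prop :=
  match (ev e).op with
  | Op.acq l => h l = none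
  | Op.rel l => h l = some (ev e).thread
  | _ => True

theorem lockOk_cons {h : ℕ → Option ℕ} {e : ℕ} {τ : Trace} :
    lockOk ev h (e :: τ) ↔ LockAllows ev h e ∧ lockOk ev (lockStep ev h e) τ := by
  cases hop : (ev e).op <;> simp [lockOk, LockAllows, lockStep, hop]

theorem lockOk_iff_forall_mem {τ : Trace} (hτ : τ.Nodup) {h : ℕ → Option ℕ} :
    lockOk ev h τ ↔ ∀ x ∈ τ, LockAllows ev ((τ.take (τ.idxOf x)).foldl (lockStep ev) h) x := by
  induction τ generalizing h with
  | nil => simp [lockOk]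
  | cons c τ ih =>
    rw [lockOk_cons, ih (nodup_cons.1 hτ).2, forall_mem_cons, idxOf_cons_self, take_zero,
      foldl_nil]
    refine and_congr_right fun _ => forall₂_congr fun x hx => ?_
    have hcx : c ≠ x := fun h => (nodup_cons.1 hτ).1 (h ▸ hx)
    rw [idxOf_cons_ne _ hcx, take_succ_cons, foldl_cons]

def lockEvents (ev : ℕ → EventData) (l : ℕ) (τ : Trace) : Trace :=
  τ.filter fun f => (ev f).op = Op.acq l ∨ (ev f).op = Op.rel l

def holderAfter (ev : ℕ → EventData) (l f : ℕ) : Option ℕ :=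
  if (ev f).op = Op.acq l then some (ev f).thread else none

theorem foldl_lockStep_apply (l : ℕ) (τ : Trace) (h : ℕ → Option ℕ) :
    τ.foldl (lockStep ev) h l = (lockEvents ev l τ).getLast?.elim (h l) (holderAfter ev l) := by
  induction τ using List.reverseRecOn with
  | nil => rfl
  | append_singleton τ e ih =>
    rw [foldl_append, foldl_cons, foldl_nil, lockEvents, filter_append, getLast?_append]
    cases hop : (ev e).op with
    | acq a | rel a =>
      rcases eq_or_ne a l with rfl | hal
      · simp [lockStep, holderAfter, hop]
      · simp_all [lockStep, lockEvents, hal.symm]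
    | _ => simp_all [lockStep, lockEvents]

theorem foldl_lockStep_filter_apply {τ : Trace} {p : ℕ → Bool} {l : ℕ}
    (hp : ∀ f, (lockEvents ev l τ).getLast? = some f → p f) (h : ℕ → Option ℕ) :
    (τ.filter p).foldl (lockStep ev) h l = τ.foldl (lockStep ev) h l := by
  rw [foldl_lockStep_apply, foldl_lockStep_apply, lockEvents, filter_comm, ← lockEvents,
    getLast?_filter_of_forall hp]

theorem hb_of_getLast?_lockEvents {σ : Trace} (hσ : WellFormed ev σ) {x l f : ℕ} (hx : x ∈ σ)
    (hxl : (ev x).op = Op.acq l ∨ (ev x).op = Op.rel l)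
    (hf : (lockEvents ev l (σ.take (σ.idxOf x))).getLast? = some f) : HB ev σ f x := by
  have hreq := (lockOk_iff_forall_mem hσ.1).1 hσ.2 x hx
  have hfmem : f ∈ σ.take (σ.idxOf x) ∧ ((ev f).op = Op.acq l ∨ (ev f).op = Op.rel l) := by
    simpa [lockEvents] using mem_of_getLast? hf
  have hfx : trord σ f x :=
    ⟨mem_of_mem_take hfmem.1, hx, ((mem_take_iff_idxOf_lt (mem_of_mem_take hfmem.1)).1 hfmem.1).le⟩
  have hstate :
      (σ.take (σ.idxOf x)).foldl (lockStep ev) (fun _ => none) l = holderAfter ev l f := by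
    rw [foldl_lockStep_apply, hf, Option.elim]
  rcases hxl with hxop | hxop <;> rcases hfmem.2 with hfop | hfop <;>
    simp only [LockAllows, hxop, hstate, holderAfter, hfop, if_true, reduceCtorEq,
      if_false] at hreq
  · exact HB.rel_acq hfx hfop hxop
  · exact HB.thread_order ⟨hfx, Option.some.inj hreq⟩

theorem wellFormed_filter {σ : Trace} (hσ : WellFormed ev σ) {p : ℕ → Bool}
    (hp : ∀ f g, HB ev σ f g → p g → p f) : WellFormed ev (σ.filter p) := by
  refine ⟨hσ.1.filter p, (lockOk_iff_forall_mem (hσ.1.filter p)).2 fun x hxρ => ?_⟩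
  obtain ⟨hx, hpx⟩ := mem_filter.1 hxρ
  have hreq := (lockOk_iff_forall_mem hσ.1).1 hσ.2 x hx
  rw [take_idxOf_filter hxρ]
  -- the requirement at `x` only reads the state of the lock of `x`
  have hstate : ∀ l, (ev x).op = Op.acq l ∨ (ev x).op = Op.rel l →
      ((σ.take (σ.idxOf x)).filter p).foldl (lockStep ev) (fun _ => none) l =
        (σ.take (σ.idxOf x)).foldl (lockStep ev) (fun _ => none) l := fun l hl =>
    foldl_lockStep_filter_apply (fun f hf => hp f x (hb_of_getLast?_lockEvents hσ hx hl hf) hpx) _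
  cases hop : (ev x).op <;> simp only [LockAllows, hop] at hreq ⊢
  · rw [hstate _ (Or.inl hop)]; exact hreq
  · rw [hstate _ (Or.inr hop)]; exact hreq

theorem lw_eq_some {σ : Trace} {x w : ℕ} (h : lw ev σ x = some w) :
    ∃ y, (ev x).op = Op.read y ∧ (ev w).op = Op.write y ∧ w ∈ σ.take (σ.idxOf x) := by
  cases hop : (ev x).op with
  | read y =>
    simp only [lw, hop] at h
    have := mem_of_getLast? h
    simp only [mem_filter, decide_eq_true_eq] at this
    exact ⟨y, rfl, this.2, this.1⟩
  | _ => simp [lw, hop] at h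

theorem lw_filter {σ : Trace} {p : ℕ → Bool} {x : ℕ} (hx : x ∈ σ.filter p)
    (hp : ∀ w, lw ev σ x = some w → p w) : lw ev (σ.filter p) x = lw ev σ x := by
  cases hop : (ev x).op with
  | read y =>
    simp only [lw, hop] at hp ⊢
    rw [take_idxOf_filter hx, filter_comm, getLast?_filter_of_forall hp]
  | _ => simp [lw, hop]

theorem correctReordering_filter {σ : Trace} (hσ : WellFormed ev σ) {p : ℕ → Bool}
    (hHB : ∀ f g, HB ev σ f g → p g → p f)
    (hlw : ∀ x ∈ σ, p x → ∀ w, lw ev σ x = some w → p w) :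
    CorrectReordering ev σ (σ.filter p) where
  wf := wellFormed_filter hσ hHB
  subset _ he := mem_of_mem_filter he
  to_closed f g hfg hg := by
    have hf : f ∈ σ.filter p :=
      mem_filter.2 ⟨hfg.1.1, hHB f g (.thread_order hfg) (mem_filter.1 hg).2⟩
    exact ⟨hf, (trord_filter_iff hf hg).2 hfg.1, hfg.2⟩
  lw_eq x hx _ := lw_filter hx (hlw x (mem_of_mem_filter hx) (mem_filter.1 hx).2)

theorem idxOf_lt_of_lw {σ : Trace} {x w : ℕ} (h : lw ev σ x = some w) :
    σ.idxOf w < σ.idxOf x := by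
  obtain ⟨_, _, _, hw⟩ := lw_eq_some h
  exact (mem_take_iff_idxOf_lt (mem_of_mem_take hw)).1 hw

theorem Conflicting.symm {e1 e2 : ℕ} (h : Conflicting ev e1 e2) : Conflicting ev e2 e1 := by
  obtain ⟨hth, ⟨x, h1, h2⟩, hw⟩ := h
  exact ⟨Ne.symm hth, ⟨x, h2, h1⟩, hw.symm⟩

theorem HBRace.symm {σ : Trace} {e1 e2 : ℕ} (h : HBRace ev σ e1 e2) : HBRace ev σ e2 e1 :=
  ⟨h.2.1, h.1, h.2.2.1.symm, h.2.2.2.2, h.2.2.2.1⟩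

theorem hb_or_hbRace_of_lw {σ : Trace} {x w : ℕ} (hx : x ∈ σ) (h : lw ev σ x = some w) :
    HB ev σ w x ∨ HBRace ev σ w x := by
  obtain ⟨y, hxop, hwop, hw⟩ := lw_eq_some h
  have hwx : trord σ w x := ⟨mem_of_mem_take hw, hx, (idxOf_lt_of_lw h).le⟩
  refine or_iff_not_imp_left.2 fun hnot => ⟨hwx.1, hx, ?_, hnot, fun hxw => ?_⟩
  · exact ⟨fun hth => hnot (.thread_order ⟨hwx, hth⟩),
      ⟨y, by simp [loc, hwop], by simp [loc, hxop]⟩, .inl ⟨y, hwop⟩⟩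
  · exact (idxOf_lt_of_lw h).not_ge hxw.trord.2.2

theorem exists_minimal_hbRace {σ : Trace} (h : ∃ e1 e2, HBRace ev σ e1 e2) :
    ∃ e1 e2, HBRace ev σ e1 e2 ∧ σ.idxOf e1 < σ.idxOf e2 ∧
      ∀ a b, HBRace ev σ a b → σ.idxOf a < σ.idxOf b → σ.idxOf e2 ≤ σ.idxOf b := by
  classical
  have hex : ∃ n a b, HBRace ev σ a b ∧ σ.idxOf a < σ.idxOf b ∧ σ.idxOf b = n := by
    obtain ⟨a, b, hab⟩ := h
    have hne : σ.idxOf a ≠ σ.idxOf b := fun h =>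
      hab.2.2.1.1 (congrArg (fun e => (ev e).thread) ((idxOf_inj hab.1).1 h))
    rcases hne.lt_or_gt with hlt | hlt
    · exact ⟨_, a, b, hab, hlt, rfl⟩
    · exact ⟨_, b, a, hab.symm, hlt, rfl⟩
  obtain ⟨e1, e2, hrace, hlt, hn⟩ := Nat.find_spec hex
  exact ⟨e1, e2, hrace, hlt, fun a b hab hab' => hn ▸ Nat.find_min' hex ⟨a, b, hab, hab', rfl⟩⟩

def hbPast (ev : ℕ → EventData) (σ : Trace) (e1 e2 f : ℕ) : Prop :=
  (HB ev σ f e1 ∨ HB ev σ f e2) ∧ f ≠ e1 ∧ f ≠ e2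

theorem hbPast_comm (σ : Trace) (e1 e2 : ℕ) : hbPast ev σ e1 e2 = hbPast ev σ e2 e1 := by
  ext f
  simp only [hbPast, or_comm, and_comm]

theorem hbPast_of_hb {σ : Trace} {e1 e2 f g : ℕ} (h12 : ¬ HB ev σ e1 e2) (h21 : ¬ HB ev σ e2 e1)
    (hfg : HB ev σ f g) (hg : hbPast ev σ e1 e2 g) : hbPast ev σ e1 e2 f := by
  obtain ⟨hge, hg1, hg2⟩ := hg
  refine ⟨hge.imp hfg.trans hfg.trans, ?_, ?_⟩ <;> rintro rfl
  · exact hge.elim (fun h => hg1 (h.trord.antisymm hfg.trord)) fun h => h12 (hfg.trans h)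
  · exact hge.elim (fun h => h21 (hfg.trans h)) fun h => hg2 (h.trord.antisymm hfg.trord)

theorem idxOf_lt_of_hbPast {σ : Trace} {e1 e2 f : ℕ} (hlt : σ.idxOf e1 < σ.idxOf e2)
    (hf : hbPast ev σ e1 e2 f) : σ.idxOf f < σ.idxOf e2 := by
  obtain ⟨h | h, _, hf2⟩ := hf
  · exact h.trord.2.2.trans_lt hlt
  · exact h.trord.2.2.lt_of_ne fun heq => hf2 ((idxOf_inj h.trord.1).1 heq)

open Classical in
theorem enabled_filter_hbPast {σ : Trace} {e1 e2 : ℕ} (he1 : e1 ∈ σ)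
    (hth : (ev e1).thread ≠ (ev e2).thread) :
    Enabled ev σ (σ.filter fun f => decide (hbPast ev σ e1 e2 f)) e1 := by
  refine ⟨he1, fun h => (of_decide_eq_true (mem_filter.1 h).2).2.1 rfl, fun f hf hfe => ?_⟩
  refine mem_filter.2 ⟨hf.1.1, decide_eq_true ⟨.inl (.thread_order hf), hfe, ?_⟩⟩
  rintro rfl
  exact hth hf.2.symm

end Race

open Race in
/-- soundness of HB races.  If a well-formed trace contains a
pair of conflicting events that is an HB race, then it contains a predictive
race: a pair of conflicting events both enabled in some correct reordering. -/
theorem hb_race_implies_predictive_race (ev : ℕ → EventData) (σ : Trace)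
    (hwf : WellFormed ev σ)
    (hhb : ∃ e1 e2 : ℕ, HBRace ev σ e1 e2) :
    ∃ e1 e2 : ℕ, PredictiveRace ev σ e1 e2 := by
  classical
  obtain ⟨e1, e2, ⟨he1, he2, hconf, h12, h21⟩, hlt, hmin⟩ := exists_minimal_hbRace hhb
  let p : ℕ → Bool := fun f => decide (hbPast ev σ e1 e2 f)
  have hHB : ∀ f g, HB ev σ f g → p g → p f := by
    simpa [p] using fun f g => hbPast_of_hb h12 h21 (f := f) (g := g)
  have hlw : ∀ x ∈ σ, p x → ∀ w, lw ev σ x = some w → p w := by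
    intro x hx hpx w hw
    simp only [p, decide_eq_true_eq] at hpx ⊢
    refine (hb_or_hbRace_of_lw hx hw).elim (fun h => hbPast_of_hb h12 h21 h hpx) fun hrace => ?_
    exact absurd (hmin w x hrace (idxOf_lt_of_lw hw)) (idxOf_lt_of_hbPast hlt hpx).not_ge
  refine ⟨e1, e2, he1, he2, hconf, σ.filter p, correctReordering_filter hwf hHB hlw,
    enabled_filter_hbPast he1 hconf.1, ?_⟩
  simpa only [p, hbPast_comm] using enabled_filter_hbPast he2 hconf.1.symm
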